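/- arXiv:2007.11826 — 3 statements merged into one kernel-verified Lean document; each statement's English description precedes it below -/
import Mathlib

section
/- Let C ⊆ ℝⁿ be a closed convex set and let f, g : ℝⁿ → ℝ be convex functions with g continuous. Let D = {x ∈ C : g(x) ≤ 0}. Suppose D and C \ D are both nonempty, that y ∈ D minimizes f over D, that z ∈ C \ D minimizes f over C \ D, and that f(z) ≤ f(y). Then there exists x* ∈ D with g(x*) = 0 and f(x*) ≤ f(y); in particular x* also minimizes f over D. -/
/-! Walk along the segment from `y` to `z`: the continuous constraint `g` goes from `g y ≤ 0` to
`g z > 0`, so it vanishes at some point of the segment, which lies in `C` by convexity; there the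
convex objective is at most `max (f y) (f z) = f y`. -/

open Set

section

variable {E : Type*} [AddCommGroup E] [Module ℝ E] [TopologicalSpace E] [IsTopologicalAddGroup E]
  [ContinuousSMul ℝ E]

theorem exists_mem_segment_eq_zero_of_nonpos_of_nonneg {g : E → ℝ} {a b : E}
    (hg : ContinuousOn g (segment ℝ a b)) (ha : g a ≤ 0) (hb : 0 ≤ g b) :
    ∃ x ∈ segment ℝ a b, g x = 0 :=
  (convex_segment a b).isPreconnected.intermediate_value (left_mem_segment ℝ a b)
    (right_mem_segment ℝ a b) hg ⟨ha, hb⟩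

theorem ConvexOn.exists_eq_zero_le_of_le {C : Set E} {f g : E → ℝ}
    (hf : ConvexOn ℝ C f) (hg : ContinuousOn g C) {a b : E} (ha : a ∈ C) (hb : b ∈ C)
    (hga : g a ≤ 0) (hgb : 0 ≤ g b) (hfba : f b ≤ f a) :
    ∃ x ∈ C, g x = 0 ∧ f x ≤ f a := by
  have hseg : segment ℝ a b ⊆ C := hf.1.segment_subset ha hb
  obtain ⟨x, hx, hgx⟩ :=
    exists_mem_segment_eq_zero_of_nonpos_of_nonneg (hg.mono hseg) hga hgb
  exact ⟨x, hseg hx, hgx, (hf.le_on_segment ha hb hx).trans (max_eq_left hfba).le⟩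

end

theorem one_cut_equality_general {n : ℕ}
    (C : Set (EuclideanSpace ℝ (Fin n)))
    (hCconv : Convex ℝ C)
    (f g : EuclideanSpace ℝ (Fin n) → ℝ)
    (hf : ConvexOn ℝ Set.univ f)
    (hgcont : Continuous g)
    (D : Set (EuclideanSpace ℝ (Fin n)))
    (hD : D = {x ∈ C | g x ≤ 0})
    (y z : EuclideanSpace ℝ (Fin n))
    (hyD : y ∈ D) (hymin : IsMinOn f D y)
    (hzCD : z ∈ C \ D)
    (hfzy : f z ≤ f y) :
    ∃ xstar ∈ D, g xstar = 0 ∧ f xstar ≤ f y ∧ IsMinOn f D xstar := by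
  subst hD
  obtain ⟨hyC, hgy⟩ := hyD
  obtain ⟨hzC, hzD⟩ := hzCD
  have hgz : 0 ≤ g z := (not_le.mp fun h => hzD ⟨hzC, h⟩).le
  obtain ⟨x, hxC, hgx, hfx⟩ := (hf.subset (subset_univ C) hCconv).exists_eq_zero_le_of_le
    hgcont.continuousOn hyC hzC hgy hgz hfzy
  exact ⟨x, ⟨hxC, hgx.le⟩, hgx, hfx, fun w hw => hfx.trans (hymin hw)⟩

/-- **Lemma (one-cut equality).** Let `C ⊆ ℝⁿ` be a closed convex set, `f g : ℝⁿ → ℝ`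
convex with `g` continuous, `D = {x ∈ C | g x ≤ 0}`. If `D` and `C \ D` are nonempty,
`y` minimizes `f` over `D`, `z` minimizes `f` over `C \ D`, and `f z ≤ f y`, then there
is `x* ∈ D` with `g x* = 0`, `f x* ≤ f y`, and `x*` also minimizes `f` over `D`. -/
theorem one_cut_equality {n : ℕ}
    (C : Set (EuclideanSpace ℝ (Fin n)))
    (hCclosed : IsClosed C) (hCconv : Convex ℝ C)
    (f g : EuclideanSpace ℝ (Fin n) → ℝ)
    (hf : ConvexOn ℝ Set.univ f) (hg : ConvexOn ℝ Set.univ g)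
    (hgcont : Continuous g)
    (D : Set (EuclideanSpace ℝ (Fin n)))
    (hD : D = {x ∈ C | g x ≤ 0})
    (hDne : D.Nonempty) (hCDne : (C \ D).Nonempty)
    (y z : EuclideanSpace ℝ (Fin n))
    (hyD : y ∈ D) (hymin : IsMinOn f D y)
    (hzCD : z ∈ C \ D) (hzmin : IsMinOn f (C \ D) z)
    (hfzy : f z ≤ f y) :
    ∃ xstar ∈ D, g xstar = 0 ∧ f xstar ≤ f y ∧ IsMinOn f D xstar :=
  one_cut_equality_general C hCconv f g hf hgcont D hD y z hyD hymin hzCD hfzy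
end

section
/- Consider a hyperplane arrangement in ℝⁿ and a convex continuous function f : ℝⁿ → ℝ. Let P and P′ be neighboring sign patterns differing exactly at the index j, with R_P and R_{P′} both nonempty. Suppose f attains its infimum over R_P and over R_{P′}, and that inf_{v ∈ R_{P′}} f(v) ≤ inf_{v ∈ R_P} f(v). Then there exists x* ∈ R_P with ⟨a j, x*⟩ = b j and f(x*) = inf_{v ∈ R_P} f(v); in particular the infimum of f over R_P equals the infimum of f over the face R_P ∩ {x : ⟨a j, x⟩ = b j}. -/
/-!
Along the segment from `y ∈ R_P` to `y' ∈ R_{P'}` the affine function `⟪a j, ·⟫ - b j` changes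
sign, so the segment crosses the hyperplane `⟪a j, ·⟫ = b j` at some `x`. Every other constraint
is shared by the two patterns and cuts out a convex half-space containing both ends, so `x ∈ R_P`.
By convexity `f x ≤ max (f y) (f y') = f y`, while `f y ≤ f x` by minimality of `y`.
-/

open scoped RealInnerProductSpace

/-- The closed region of a hyperplane arrangement (normals `a`, offsets `b`)
corresponding to the sign pattern `P` (`true` encodes `+1`, `false` encodes `−1`). -/
def hypRegion {n : ℕ} {ι : Type*} (a : ι → EuclideanSpace ℝ (Fin n)) (b : ι → ℝ)
    (P : ι → Bool) : Set (EuclideanSpace ℝ (Fin n)) :=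
  {x | ∀ i, if P i then b i ≤ ⟪a i, x⟫ else ⟪a i, x⟫ ≤ b i}

open Set

theorem IsMinOn.csInf_image_eq {α β : Type*} [ConditionallyCompleteLattice β] {f : α → β}
    {s : Set α} {a : α} (hmin : IsMinOn f s a) (ha : a ∈ s) : sInf (f '' s) = f a :=
  IsLeast.csInf_eq ⟨mem_image_of_mem f ha, forall_mem_image.2 (isMinOn_iff.1 hmin)⟩

section InnerProductSpace

variable {E : Type*} [NormedAddCommGroup E] [InnerProductSpace ℝ E]

theorem exists_mem_segment_inner_eq {u y y' : E} {c : ℝ} (hc : c ∈ uIcc ⟪u, y⟫ ⟪u, y'⟫) :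
    ∃ x ∈ segment ℝ y y', ⟪u, x⟫ = c := by
  have hseg := image_segment ℝ (innerₛₗ ℝ u).toAffineMap y y'
  simp only [LinearMap.coe_toAffineMap, innerₛₗ_apply_apply, segment_eq_uIcc] at hseg
  rwa [← hseg] at hc

theorem convex_signedHalfSpace (p : Bool) (u : E) (c : ℝ) :
    Convex ℝ {x : E | if p then c ≤ ⟪u, x⟫ else ⟪u, x⟫ ≤ c} := by
  cases p
  · exact convex_halfSpace_le (innerₛₗ ℝ u).isLinear c
  · exact convex_halfSpace_ge (innerₛₗ ℝ u).isLinear c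

end InnerProductSpace

section Neighbors

variable {n : ℕ} {ι : Type*} {a : ι → EuclideanSpace ℝ (Fin n)} {b : ι → ℝ} {P P' : ι → Bool}
  {j : ι} {x y y' : EuclideanSpace ℝ (Fin n)}

theorem offset_mem_uIcc_of_ne (hj : P j ≠ P' j) (hy : y ∈ hypRegion a b P)
    (hy' : y' ∈ hypRegion a b P') : b j ∈ uIcc ⟪a j, y⟫ ⟪a j, y'⟫ := by
  have h := hy j
  have h' := hy' j
  cases hP : P j <;> cases hP' : P' j <;> simp only [hP, hP', ne_eq, not_true_eq_false,
    Bool.false_eq_true, ite_true, ite_false] at hj h h'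
  · exact Set.mem_uIcc.2 (Or.inl ⟨h, h'⟩)
  · exact Set.mem_uIcc.2 (Or.inr ⟨h', h⟩)

theorem mem_hypRegion_of_mem_segment (hagree : ∀ i, i ≠ j → P i = P' i)
    (hy : y ∈ hypRegion a b P) (hy' : y' ∈ hypRegion a b P') (hx : x ∈ segment ℝ y y')
    (hxj : ⟪a j, x⟫ = b j) : x ∈ hypRegion a b P := by
  intro i
  rcases eq_or_ne i j with rfl | hij
  · split_ifs
    exacts [hxj.ge, hxj.le]
  · have h' := hy' i
    rw [← hagree i hij] at h'
    exact (convex_signedHalfSpace (P i) (a i) (b i)).segment_subset (hy i) h' hx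

end Neighbors

theorem neighbor_face_min_general {n : ℕ} {ι : Type*}
    (a : ι → EuclideanSpace ℝ (Fin n)) (b : ι → ℝ)
    (f : EuclideanSpace ℝ (Fin n) → ℝ)
    (hf : ConvexOn ℝ Set.univ f)
    (P P' : ι → Bool) (j : ι)
    (hj : P j ≠ P' j) (hagree : ∀ i, i ≠ j → P i = P' i)
    (y y' : EuclideanSpace ℝ (Fin n))
    (hy : y ∈ hypRegion a b P) (hymin : IsMinOn f (hypRegion a b P) y)
    (hy' : y' ∈ hypRegion a b P')
    (hle : f y' ≤ f y) :
    ∃ xstar ∈ hypRegion a b P, ⟪a j, xstar⟫ = b j ∧ f xstar = f y ∧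
      sInf (f '' hypRegion a b P) =
        sInf (f '' (hypRegion a b P ∩ {x | ⟪a j, x⟫ = b j})) := by
  obtain ⟨x, hxseg, hxj⟩ := exists_mem_segment_inner_eq (offset_mem_uIcc_of_ne hj hy hy')
  have hxP : x ∈ hypRegion a b P := mem_hypRegion_of_mem_segment hagree hy hy' hxseg hxj
  have hfx : f x = f y :=
    le_antisymm ((hf.le_max_of_mem_segment trivial trivial hxseg).trans (max_le le_rfl hle))
      (hymin hxP)
  have hface : IsMinOn f (hypRegion a b P ∩ {x | ⟪a j, x⟫ = b j}) x :=
    fun z hz => hfx.le.trans (hymin hz.1)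
  refine ⟨x, hxP, hxj, hfx, ?_⟩
  rw [hymin.csInf_image_eq hy, hface.csInf_image_eq ⟨hxP, hxj⟩, hfx]

/-- If `P` and `P'` are neighboring patterns differing exactly at index `j`, both regions
are nonempty, `f` is convex and continuous and attains its minimum over each region at
`y` resp. `y'` with `f y' ≤ f y`, then some `x* ∈ R_P` on the hyperplane `⟨a j, ·⟩ = b j`
attains the minimum of `f` over `R_P`; in particular the infimum of `f` over `R_P`
equals its infimum over the common face `R_P ∩ {x | ⟨a j, x⟩ = b j}`. -/
theorem neighbor_face_min {n : ℕ} {ι : Type*} [Fintype ι]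
    (a : ι → EuclideanSpace ℝ (Fin n)) (b : ι → ℝ)
    (f : EuclideanSpace ℝ (Fin n) → ℝ)
    (hf : ConvexOn ℝ Set.univ f) (hfcont : Continuous f)
    (P P' : ι → Bool) (j : ι)
    (hj : P j ≠ P' j) (hagree : ∀ i, i ≠ j → P i = P' i)
    (hPne : (hypRegion a b P).Nonempty) (hP'ne : (hypRegion a b P').Nonempty)
    (y y' : EuclideanSpace ℝ (Fin n))
    (hy : y ∈ hypRegion a b P) (hymin : IsMinOn f (hypRegion a b P) y)
    (hy' : y' ∈ hypRegion a b P') (hy'min : IsMinOn f (hypRegion a b P') y')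
    (hle : f y' ≤ f y) :
    ∃ xstar ∈ hypRegion a b P, ⟪a j, xstar⟫ = b j ∧ f xstar = f y ∧
      sInf (f '' hypRegion a b P) =
        sInf (f '' (hypRegion a b P ∩ {x | ⟪a j, x⟫ = b j})) :=
  neighbor_face_min_general a b f hf P P' j hj hagree y y' hy hymin hy' hle
end

section
/- Consider a hyperplane arrangement in ℝⁿ, a nonempty compact convex set C ⊆ ℝⁿ, and a convex continuous function f : ℝⁿ → ℝ. Let A be a sign pattern such that R_A ∩ C contains a point minimizing f over C, and let A′ be a sign pattern such that R_{A′} ∩ C is nonempty. Then there exist k ≥ 0 and sign patterns A = A⁰, A¹, …, A^k = A′ such that: (i) consecutive patterns Aᶦ and Aᶦ⁺¹ are neighbors, (ii) R_{Aᶦ} ∩ C is nonempty for every i ≤ k, and (iii) inf_{v ∈ R_{Aᶦ} ∩ C} f(v) ≤ inf_{v ∈ R_{Aᶦ⁺¹} ∩ C} f(v) for every i < k. -/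
open scoped RealInnerProductSpace

/-!
Let `m P` be the minimum of `f` on `R_P ∩ C`; we reach the patterns meeting `C` in order of
increasing `m`. For such a `P`, let `y` attain `m P`. Walking along the segment `[v, y] ⊆ C` and
flipping each time the sign of the first hyperplane crossed gives a chain of neighbouring patterns
from `A` to `P` whose regions meet the segment. As `f v ≤ f y`, convexity bounds `f` by `f y` on
the segment, so `m ≤ m P` along the chain. Patterns with `m < m P` are reachable by induction, and
a pattern with `m = m P` is reached from its predecessor in the chain by a nondecreasing step.
-/

open Set Function Relation AffineMap

theorem hammingDist_update_lt {ι : Type*} [Fintype ι] [DecidableEq ι] {β : ι → Type*}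
    [∀ i, DecidableEq (β i)] {x y : ∀ i, β i} {j : ι} (h : x j ≠ y j) :
    hammingDist (update x j (y j)) y < hammingDist x y := by
  refine Finset.card_lt_card (Finset.ssubset_iff_of_subset ?_ |>.2 ⟨j, by simp [h], by simp⟩)
  intro i
  rcases eq_or_ne i j with rfl | hij <;> simp_all

theorem Relation.ReflTransGen.exists_fin_chain {α : Type*} {r : α → α → Prop} {a b : α}
    (h : ReflTransGen r a b) :
    ∃ (k : ℕ) (B : Fin (k + 1) → α), B 0 = a ∧ B (Fin.last k) = b ∧
      ∀ i : Fin k, r (B i.castSucc) (B i.succ) := by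
  induction h using Relation.ReflTransGen.head_induction_on with
  | refl => exact ⟨0, fun _ => b, rfl, rfl, fun i => i.elim0⟩
  | head hac _ ih =>
    obtain ⟨k, B, hB0, hBk, hB⟩ := ih
    refine ⟨k + 1, Fin.cons _ B, rfl, by simpa [← Fin.succ_last] using hBk, ?_⟩
    intro i
    induction i using Fin.cases with
    | zero => simpa [hB0] using hac
    | succ i => simpa [← Fin.succ_castSucc] using hB i

section Halfspace

variable {E : Type*} [NormedAddCommGroup E] [InnerProductSpace ℝ E]

def signedHalfspace (a : E) (b : ℝ) (s : Bool) : Set E :=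
  {x | if s then b ≤ ⟪a, x⟫ else ⟪a, x⟫ ≤ b}

theorem convex_signedHalfspace (a : E) (b : ℝ) (s : Bool) :
    Convex ℝ (signedHalfspace a b s) := by
  cases s
  · exact convex_halfSpace_le (innerₛₗ ℝ a).isLinear b
  · exact convex_halfSpace_ge (innerₛₗ ℝ a).isLinear b

theorem isClosed_signedHalfspace (a : E) (b : ℝ) (s : Bool) :
    IsClosed (signedHalfspace a b s) := by
  cases s
  · exact isClosed_le (continuous_const.inner continuous_id) continuous_const
  · exact isClosed_le continuous_const (continuous_const.inner continuous_id)

theorem mem_signedHalfspace_of_inner_eq {a x : E} {b : ℝ} (h : ⟪a, x⟫ = b) (s : Bool) :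
    x ∈ signedHalfspace a b s := by
  cases s <;> simp [signedHalfspace, h]

theorem exists_inner_lineMap_eq {a x y : E} {b : ℝ} {s s' : Bool}
    (hx : x ∈ signedHalfspace a b s) (hy : y ∈ signedHalfspace a b s') (hs : s ≠ s') :
    ∃ t ∈ Icc (0 : ℝ) 1, ⟪a, lineMap x y t⟫ = b := by
  have hcont : Continuous fun t : ℝ => ⟪a, lineMap x y t⟫ :=
    continuous_const.inner (lineMap_continuous (V := E))
  have hb : b ∈ uIcc ⟪a, lineMap x y (0 : ℝ)⟫ ⟪a, lineMap x y (1 : ℝ)⟫ := by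
    rw [lineMap_apply_zero, lineMap_apply_one, mem_uIcc]
    cases s <;> cases s' <;> simp_all [signedHalfspace]
  simpa [uIcc_of_le zero_le_one] using intermediate_value_uIcc hcont.continuousOn hb

end Halfspace

def IsNeighbor {ι : Type*} {β : ι → Type*} (P Q : ∀ i, β i) : Prop :=
  ∃ j, P j ≠ Q j ∧ ∀ i, i ≠ j → P i = Q i

theorem isNeighbor_update {ι : Type*} [DecidableEq ι] {β : ι → Type*} {P : ∀ i, β i} {j : ι}
    {s : β j} (h : P j ≠ s) : IsNeighbor P (update P j s) :=
  ⟨j, by simpa using h, fun _ hi => (update_of_ne hi _ _).symm⟩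

section Arrangement

variable {n : ℕ} {ι : Type*} {a : ι → EuclideanSpace ℝ (Fin n)} {b : ι → ℝ}

theorem hypRegion_eq_iInter (P : ι → Bool) :
    hypRegion a b P = ⋂ i, signedHalfspace (a i) (b i) (P i) := by
  ext x
  simp [hypRegion, signedHalfspace]

theorem isClosed_hypRegion (P : ι → Bool) : IsClosed (hypRegion a b P) := by
  rw [hypRegion_eq_iInter]
  exact isClosed_iInter fun i => isClosed_signedHalfspace _ _ _

theorem exists_update_mem_hypRegion_segment [Fintype ι] [DecidableEq ι] {P Q : ι → Bool}
    {x y : EuclideanSpace ℝ (Fin n)} (hx : x ∈ hypRegion a b P) (hy : y ∈ hypRegion a b Q)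
    (hPQ : P ≠ Q) :
    ∃ j, P j ≠ Q j ∧ ∃ z ∈ segment ℝ x y, z ∈ hypRegion a b (update P j (Q j)) := by
  simp only [hypRegion_eq_iInter, mem_iInter] at hx hy ⊢
  -- `t i` is where the segment crosses the `i`-th hyperplane; flip the one crossed first
  choose! t ht_mem ht_eq using fun i (hi : P i ≠ Q i) => exists_inner_lineMap_eq (hx i) (hy i) hi
  obtain ⟨j, hj, hj_min⟩ := Finset.exists_min_image {i | P i ≠ Q i} t <| by
    obtain ⟨i, hi⟩ := Function.ne_iff.1 hPQ
    exact ⟨i, by simpa using hi⟩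
  simp only [Finset.mem_filter, Finset.mem_univ, true_and] at hj hj_min
  refine ⟨j, hj, lineMap x y (t j), lineMap_mem_segment ℝ x y (ht_mem j hj), fun i => ?_⟩
  rcases eq_or_ne i j with rfl | hij
  · exact mem_signedHalfspace_of_inner_eq (ht_eq i hj) _
  rw [update_of_ne hij]
  -- the parameters of the segment lying in a halfspace form an interval
  have hI := ((convex_signedHalfspace (a i) (b i) (P i)).affine_preimage (lineMap x y)).ordConnected
  have h0 : (0 : ℝ) ∈ lineMap x y ⁻¹' signedHalfspace (a i) (b i) (P i) := by
    simpa using hx i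
  by_cases hi : P i = Q i
  · exact hI.out h0 (show (1 : ℝ) ∈ _ by simpa [hi] using hy i) (ht_mem j hj)
  · exact hI.out h0 (mem_signedHalfspace_of_inner_eq (ht_eq i hi) _)
      ⟨(ht_mem j hj).1, hj_min i hi⟩

def NeighborWithin (a : ι → EuclideanSpace ℝ (Fin n)) (b : ι → ℝ)
    (S : Set (EuclideanSpace ℝ (Fin n))) (P Q : ι → Bool) : Prop :=
  IsNeighbor P Q ∧ (hypRegion a b Q ∩ S).Nonempty

theorem reflTransGen_neighborWithin_segment [Fintype ι] [DecidableEq ι] {P Q : ι → Bool}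
    {x y : EuclideanSpace ℝ (Fin n)} (hx : x ∈ hypRegion a b P) (hy : y ∈ hypRegion a b Q) :
    ReflTransGen (NeighborWithin a b (segment ℝ x y)) P Q := by
  by_cases hPQ : P = Q
  · exact hPQ ▸ ReflTransGen.refl
  obtain ⟨j, hj, z, hz, hzP⟩ := exists_update_mem_hypRegion_segment hx hy hPQ
  have hsub : segment ℝ z y ⊆ segment ℝ x y :=
    (convex_segment x y).segment_subset hz (right_mem_segment ℝ x y)
  exact .head ⟨isNeighbor_update hj, z, hzP, hz⟩ <|
    ReflTransGen.mono (fun _ _ h => ⟨h.1, h.2.mono (inter_subset_inter_right _ hsub)⟩) _ _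
      (reflTransGen_neighborWithin_segment hzP hy)
termination_by hammingDist P Q
decreasing_by exact hammingDist_update_lt hj

end Arrangement

section Descent

variable {n : ℕ} {ι : Type*} (a : ι → EuclideanSpace ℝ (Fin n)) (b : ι → ℝ)
  (C : Set (EuclideanSpace ℝ (Fin n))) (f : EuclideanSpace ℝ (Fin n) → ℝ)

noncomputable def regionInf (P : ι → Bool) : ℝ :=
  sInf (f '' (hypRegion a b P ∩ C))

def MonotoneStep (P Q : ι → Bool) : Prop :=
  NeighborWithin a b C P Q ∧ regionInf a b C f P ≤ regionInf a b C f Q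

variable {a b C f}

theorem regionInf_le (hC : IsCompact C) (hf : ContinuousOn f C) {P : ι → Bool} {z}
    (hz : z ∈ hypRegion a b P ∩ C) : regionInf a b C f P ≤ f z :=
  csInf_le ((hC.inter_left (isClosed_hypRegion P)).bddBelow_image (hf.mono inter_subset_right))
    (mem_image_of_mem f hz)

theorem exists_regionInf_eq (hC : IsCompact C) (hf : ContinuousOn f C) {P : ι → Bool}
    (hP : (hypRegion a b P ∩ C).Nonempty) :
    ∃ y ∈ hypRegion a b P ∩ C, regionInf a b C f P = f y :=
  (hC.inter_left (isClosed_hypRegion P)).exists_sInf_image_eq hP (hf.mono inter_subset_right)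

theorem reflTransGen_monotoneStep [Fintype ι] (hCcomp : IsCompact C) (hCconv : Convex ℝ C)
    (hf : ConvexOn ℝ C f) (hfcont : ContinuousOn f C) {A : ι → Bool}
    {v : EuclideanSpace ℝ (Fin n)} (hv : v ∈ hypRegion a b A ∩ C) (hvmin : IsMinOn f C v)
    (P : ι → Bool) (hP : (hypRegion a b P ∩ C).Nonempty) :
    ReflTransGen (MonotoneStep a b C f) A P := by
  classical
  induction P using (Finite.wellFounded_of_trans_of_irrefl
    (InvImage (· < ·) (regionInf a b C f))).induction with
  | _ P ih =>
  obtain ⟨y, hy, hPy⟩ := exists_regionInf_eq hCcomp hfcont hP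
  have hsegC : segment ℝ v y ⊆ C := hCconv.segment_subset hv.2 hy.2
  have hle : ∀ Q, (hypRegion a b Q ∩ segment ℝ v y).Nonempty →
      regionInf a b C f Q ≤ regionInf a b C f P := by
    rintro Q ⟨z, hzQ, hz⟩
    calc regionInf a b C f Q ≤ f z := regionInf_le hCcomp hfcont ⟨hzQ, hsegC hz⟩
      _ ≤ max (f v) (f y) := hf.le_on_segment hv.2 hy.2 hz
      _ = regionInf a b C f P := by rw [max_eq_right (hvmin hy.2), hPy]
  suffices ∀ Q, ReflTransGen (NeighborWithin a b (segment ℝ v y)) A Q →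
      ReflTransGen (MonotoneStep a b C f) A Q ∧ (hypRegion a b Q ∩ segment ℝ v y).Nonempty from
    (this P (reflTransGen_neighborWithin_segment hv.1 hy.1)).1
  intro Q hQ
  induction hQ with
  | refl => exact ⟨.refl, v, hv.1, left_mem_segment ℝ v y⟩
  | @tail R Q _ hRQ ih_chain =>
    obtain ⟨hreach, hRseg⟩ := ih_chain
    obtain ⟨hnb, z, hzQ, hz⟩ := hRQ
    have hQ : (hypRegion a b Q ∩ C).Nonempty := ⟨z, hzQ, hsegC hz⟩
    refine ⟨?_, z, hzQ, hz⟩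
    rcases (hle Q ⟨z, hzQ, hz⟩).lt_or_eq with hlt | heq
    · exact ih Q hlt hQ
    · exact hreach.tail ⟨⟨hnb, hQ⟩, heq ▸ hle R hRseg⟩

end Descent

theorem increasing_sequence_of_patterns_general {n : ℕ} {ι : Type*} [Fintype ι]
    (a : ι → EuclideanSpace ℝ (Fin n)) (b : ι → ℝ)
    (C : Set (EuclideanSpace ℝ (Fin n)))
    (hCcomp : IsCompact C) (hCconv : Convex ℝ C)
    (f : EuclideanSpace ℝ (Fin n) → ℝ)
    (hf : ConvexOn ℝ Set.univ f) (hfcont : Continuous f)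
    (A A' : ι → Bool)
    (v : EuclideanSpace ℝ (Fin n))
    (hv : v ∈ hypRegion a b A ∩ C) (hvmin : IsMinOn f C v)
    (hA' : (hypRegion a b A' ∩ C).Nonempty) :
    ∃ (k : ℕ) (B : Fin (k + 1) → ι → Bool),
      B 0 = A ∧ B (Fin.last k) = A' ∧
      (∀ i : Fin k, ∃ j : ι, B i.castSucc j ≠ B i.succ j ∧
        ∀ i' : ι, i' ≠ j → B i.castSucc i' = B i.succ i') ∧
      (∀ i : Fin (k + 1), (hypRegion a b (B i) ∩ C).Nonempty) ∧
      (∀ i : Fin k,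
        sInf (f '' (hypRegion a b (B i.castSucc) ∩ C)) ≤
          sInf (f '' (hypRegion a b (B i.succ) ∩ C))) := by
  obtain ⟨k, B, hB0, hBk, hstep⟩ :=
    (reflTransGen_monotoneStep hCcomp hCconv (hf.subset (subset_univ C) hCconv)
      hfcont.continuousOn hv hvmin A' hA').exists_fin_chain
  refine ⟨k, B, hB0, hBk, fun i => (hstep i).1.1, fun i => ?_, fun i => (hstep i).2⟩
  induction i using Fin.cases with
  | zero => exact hB0 ▸ ⟨v, hv⟩
  | succ i => exact (hstep i).1.2

/-- Within a nonempty compact convex set `C`, starting from a pattern `A` whose region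
contains a minimizer of the convex continuous function `f` over `C`, any pattern `A'`
with `R_{A'} ∩ C ≠ ∅` can be reached by a path of neighboring patterns whose regions all
meet `C` and along which the infimum of `f` over `R ∩ C` is monotonically nondecreasing. -/
theorem increasing_sequence_of_patterns {n : ℕ} {ι : Type*} [Fintype ι]
    (a : ι → EuclideanSpace ℝ (Fin n)) (b : ι → ℝ)
    (C : Set (EuclideanSpace ℝ (Fin n)))
    (hCne : C.Nonempty) (hCcomp : IsCompact C) (hCconv : Convex ℝ C)
    (f : EuclideanSpace ℝ (Fin n) → ℝ)
    (hf : ConvexOn ℝ Set.univ f) (hfcont : Continuous f)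
    (A A' : ι → Bool)
    (v : EuclideanSpace ℝ (Fin n))
    (hv : v ∈ hypRegion a b A ∩ C) (hvmin : IsMinOn f C v)
    (hA' : (hypRegion a b A' ∩ C).Nonempty) :
    ∃ (k : ℕ) (B : Fin (k + 1) → ι → Bool),
      B 0 = A ∧ B (Fin.last k) = A' ∧
      (∀ i : Fin k, ∃ j : ι, B i.castSucc j ≠ B i.succ j ∧
        ∀ i' : ι, i' ≠ j → B i.castSucc i' = B i.succ i') ∧
      (∀ i : Fin (k + 1), (hypRegion a b (B i) ∩ C).Nonempty) ∧
      (∀ i : Fin k,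
        sInf (f '' (hypRegion a b (B i.castSucc) ∩ C)) ≤
          sInf (f '' (hypRegion a b (B i.succ) ∩ C))) :=
  increasing_sequence_of_patterns_general a b C hCcomp hCconv f hf hfcont A A' v hv hvmin hA'
end
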